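/- Let u be a utility function on a finite set M of goods, b > 0, q ∈ F^u, and y ∈ ℝ≥0^M with u(y) > 0. Then y ∈ G^u(q,b) if and only if there exists a supergradient g ∈ ∂^∧u(y) such that g_j ≤ q_j·u(y)/b for every j ∈ M, with equality whenever y_j > 0. -/

import Mathlib

open scoped BigOperators

noncomputable section

/-- Scalar product `⟨p, x⟩ = ∑ j p_j x_j`. -/
def dot {M : Type*} [Fintype M] (p x : M → ℝ) : ℝ := ∑ j, p j * x j

/-- A utility function on bundles of goods indexed by `M`. -/
structure IsUtility {M : Type*} [Fintype M] (u : (M → ℝ) → ℝ) : Prop where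
  concave : ConcaveOn ℝ {x : M → ℝ | 0 ≤ x} u
  mono : ∀ ⦃x x' : M → ℝ⦄, 0 ≤ x → x ≤ x' → u x ≤ u x'
  zero : u 0 = 0
  exists_pos : ∃ x : M → ℝ, 0 ≤ x ∧ 0 < u x

/-- `g` is a supergradient of `u` at `x` (over the nonnegative orthant). -/
def IsSupergradient {M : Type*} [Fintype M] (u : (M → ℝ) → ℝ) (x g : M → ℝ) :
    Prop :=
  ∀ z : M → ℝ, 0 ≤ z → u z ≤ u x + dot g (z - x)

/-- The Gale demand correspondence `G^u(q,b)`. -/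
def GaleDemand {M : Type*} [Fintype M] (u : (M → ℝ) → ℝ) (q : M → ℝ) (b : ℝ) :
    Set (M → ℝ) :=
  {y | 0 ≤ y ∧ 0 < u y ∧ ∀ z : M → ℝ, 0 ≤ z → 0 < u z →
    b * Real.log (u z) - dot q z ≤ b * Real.log (u y) - dot q y}

/-- `F^u`: prices at which the Gale objective is bounded above for some budget. -/
def FsetU {M : Type*} [Fintype M] (u : (M → ℝ) → ℝ) : Set (M → ℝ) :=
  {q | 0 ≤ q ∧ ∃ b : ℝ, 0 < b ∧
    BddAbove ((fun y => b * Real.log (u y) - dot q y) ''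
      {y : M → ℝ | 0 ≤ y ∧ 0 < u y})}

private lemma dot_sub' {M : Type*} [Fintype M] (g z y : M → ℝ) :
    dot g (z - y) = dot g z - dot g y := by
  simp [dot, ← Finset.sum_sub_distrib, mul_sub]

/-- KKT characterization of the Gale demand: `y ∈ G^u(q,b)` iff there is a
supergradient `g` of `u` at `y` with `g j ≤ q j · u(y)/b`, with equality
whenever `y j > 0`. -/
theorem gale_demand_kkt {M : Type*} [Fintype M]
    (u : (M → ℝ) → ℝ) (hu : IsUtility u) (b : ℝ) (hb : 0 < b)
    (q : M → ℝ) (hq : q ∈ FsetU u) (y : M → ℝ) (hy0 : 0 ≤ y) (hy : 0 < u y) :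
    y ∈ GaleDemand u q b ↔
      ∃ g : M → ℝ, IsSupergradient u y g ∧
        ∀ j, g j ≤ q j * u y / b ∧ (0 < y j → g j = q j * u y / b) := by
  constructor
  · intro hGale
    refine ⟨fun j => q j * u y / b, ?_, fun j => ⟨le_refl _, fun _ => rfl⟩⟩
    intro z hz
    have huz0 : 0 ≤ u z := by
      have h := hu.mono (le_refl (0 : M → ℝ)) hz
      rwa [hu.zero] at h
    set δ : ℝ := u z - u y with hδ
    set C : ℝ := dot q z - dot q y with hC
    have key : ∀ t : ℝ, t ∈ Set.Ioo (0:ℝ) 1 → b * δ / (u y + t * δ) ≤ C := by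
      intro t ht
      obtain ⟨ht0, ht1⟩ := ht
      set w : M → ℝ := (1 - t) • y + t • z with hw
      have hw0 : 0 ≤ w := by
        intro j
        have h : (0:ℝ) ≤ (1 - t) * y j + t * z j :=
          add_nonneg (mul_nonneg (by linarith) (hy0 j)) (mul_nonneg ht0.le (hz j))
        simpa [hw, Pi.add_apply, Pi.smul_apply, smul_eq_mul] using h
      have hcon : (1 - t) * u y + t * u z ≤ u w := by
        have h := hu.concave.2 (show y ∈ {x : M → ℝ | 0 ≤ x} from hy0)
          (show z ∈ {x : M → ℝ | 0 ≤ x} from hz)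
          (show (0:ℝ) ≤ 1 - t by linarith) ht0.le (by ring)
        simpa [smul_eq_mul] using h
      have hD : 0 < u y + t * δ := by rw [hδ]; nlinarith
      have hDw : u y + t * δ ≤ u w := by rw [hδ]; nlinarith
      have huw : 0 < u w := lt_of_lt_of_le hD hDw
      have hopt := hGale.2.2 w hw0 huw
      have hdotw : dot q w = (1 - t) * dot q y + t * dot q z := by
        simp only [dot, hw, Pi.add_apply, Pi.smul_apply, smul_eq_mul, Finset.mul_sum,
          ← Finset.sum_add_distrib]
        exact Finset.sum_congr rfl fun j _ => by ring
      have hlog1 : Real.log (u y) - Real.log (u w) ≤ u y / u w - 1 := by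
        have h := Real.log_le_sub_one_of_pos (div_pos hy huw)
        rwa [Real.log_div (ne_of_gt hy) (ne_of_gt huw)] at h
      have hfrac : u y / u w ≤ u y / (u y + t * δ) :=
        div_le_div_of_nonneg_left hy.le hD hDw
      have e1 : t * δ / (u y + t * δ) = 1 - u y / (u y + t * δ) := by
        field_simp; ring
      have h2 : b * Real.log (u w) - b * Real.log (u y) ≤ t * C := by
        have e : dot q w - dot q y = t * C := by rw [hdotw, hC]; ring
        linarith [hopt]
      have h1 : t * δ / (u y + t * δ) ≤ Real.log (u w) - Real.log (u y) := by
        rw [e1]; linarith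
      have h3 : b * (t * δ / (u y + t * δ)) ≤ t * C := by
        nlinarith [mul_le_mul_of_nonneg_left h1 hb.le]
      have h4 : t * (b * δ / (u y + t * δ)) ≤ t * C := by
        have e : b * (t * δ / (u y + t * δ)) = t * (b * δ / (u y + t * δ)) := by ring
        linarith [h3]
      exact le_of_mul_le_mul_left h4 ht0
    have hlim : Filter.Tendsto (fun t : ℝ => b * δ / (u y + t * δ)) (nhds 0)
        (nhds (b * δ / u y)) := by
      have h1 : Filter.Tendsto (fun t : ℝ => u y + t * δ) (nhds 0) (nhds (u y)) := by
        have hc : Continuous (fun t : ℝ => u y + t * δ) := by continuity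
        simpa using hc.tendsto 0
      exact Filter.Tendsto.div tendsto_const_nhds h1 (ne_of_gt hy)
    have hev : ∀ᶠ t in nhdsWithin (0:ℝ) (Set.Ioi 0), b * δ / (u y + t * δ) ≤ C := by
      have h01 : Set.Iio (1:ℝ) ∈ nhdsWithin (0:ℝ) (Set.Ioi 0) :=
        nhdsWithin_le_nhds (Iio_mem_nhds one_pos)
      filter_upwards [h01, self_mem_nhdsWithin] with t ht1 ht0
      exact key t ⟨ht0, ht1⟩
    have hfinal : b * δ / u y ≤ C :=
      le_of_tendsto (hlim.mono_left nhdsWithin_le_nhds) hev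
    have hδC : δ ≤ u y / b * C := by
      rw [div_le_iff₀ hy] at hfinal
      rw [div_mul_eq_mul_div, le_div_iff₀ hb]
      nlinarith
    have hdotg : dot (fun j => q j * u y / b) (z - y) = u y / b * C := by
      simp only [dot, Pi.sub_apply, hC]
      rw [mul_sub, Finset.mul_sum, Finset.mul_sum, ← Finset.sum_sub_distrib]
      exact Finset.sum_congr rfl fun j _ => by ring
    rw [hdotg]
    have : δ = u z - u y := hδ
    linarith [hδC]
  · rintro ⟨g, hsg, hg⟩
    refine ⟨hy0, hy, fun z hz huz => ?_⟩
    have hsum_y : dot g y = u y / b * dot q y := by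
      simp only [dot, Finset.mul_sum]
      refine Finset.sum_congr rfl fun j _ => ?_
      rcases eq_or_lt_of_le (show (0:ℝ) ≤ y j from hy0 j) with h | h
      · rw [← h]; ring
      · rw [(hg j).2 h]; ring
    have hsum_z : dot g z ≤ u y / b * dot q z := by
      simp only [dot, Finset.mul_sum]
      refine Finset.sum_le_sum fun j _ => ?_
      calc g j * z j ≤ q j * u y / b * z j :=
            mul_le_mul_of_nonneg_right (hg j).1 (hz j)
        _ = u y / b * (q j * z j) := by ring
    have hsup := hsg z hz
    rw [dot_sub'] at hsup
    set X : ℝ := dot g z - dot g y with hX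
    have hs0 : 0 < u y + X := lt_of_lt_of_le huz hsup
    have hlog1 : Real.log (u z) ≤ Real.log (u y + X) :=
      Real.log_le_log huz hsup
    have hlog2 : Real.log (u y + X) - Real.log (u y) ≤ X / u y := by
      have h := Real.log_le_sub_one_of_pos (div_pos hs0 hy)
      rw [Real.log_div (ne_of_gt hs0) (ne_of_gt hy)] at h
      have e : (u y + X) / u y - 1 = X / u y := by field_simp; ring
      linarith
    have h4 : Real.log (u z) ≤ Real.log (u y) + X / u y := by linarith
    have hkey : b * Real.log (u z) ≤ b * Real.log (u y) + b * (X / u y) := by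
      nlinarith [mul_le_mul_of_nonneg_left h4 hb.le]
    have hXle : X ≤ u y / b * (dot q z - dot q y) := by
      rw [hX]; linarith [hsum_z, hsum_y]
    have hbne : b ≠ 0 := ne_of_gt hb
    have h5 : b * (X / u y) ≤ dot q z - dot q y := by
      have e2 : b * (X / u y) = b * X / u y := by ring
      rw [e2, div_le_iff₀ hy]
      have h6 : b * X ≤ b * (u y / b * (dot q z - dot q y)) :=
        mul_le_mul_of_nonneg_left hXle hb.le
      have e3 : b * (u y / b * (dot q z - dot q y)) = (dot q z - dot q y) * u y := by
        field_simp
      exact le_of_le_of_eq h6 e3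
    linarith [hkey, h5]
  end
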